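/- arXiv:2010.12528 — 3 statements merged into one kernel-verified Lean document; each statement's English description precedes it below -/
import Mathlib

section
/- Let E be a finite set of edges with positive real length function l, and let P be a DP-system on a connected metric graph Γ assembled from E with a nonempty set of initial vertices. Then there exists a DP-system P′ on a tree (connected acyclic) metric graph Γ′ assembled from E, with exactly one initial vertex, such that N_{P′}(t) ≤ N_P(t) for all t ≥ 0. -/
/-!
Common framework: metric multigraphs assembled from an edge set `E`
(`ends : E → Sym2 V` with distinct endpoints), walks, dynamic-point
systems, stabilization times, and structural graph notions.
-/

/-- Walks in a multigraph on vertices `V` with edge set `E` and endpoint map `ends`: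
an alternating sequence of vertices and edges. -/
inductive MGWalk {E V : Type} (ends : E → Sym2 V) : V → V → Type where
  | nil (a : V) : MGWalk ends a a
  | cons {a b c : V} (e : E) (h : ends e = s(a, b)) (tail : MGWalk ends b c) :
      MGWalk ends a c

namespace MGWalk

variable {E V : Type} {ends : E → Sym2 V}

/-- Length of a walk with respect to an edge-length function. -/
def length (l : E → ℝ) : ∀ {a b : V}, MGWalk ends a b → ℝ
  | _, _, nil _ => 0
  | _, _, cons e _ tail => l e + tail.length l

/-- The list of edge entries of a walk. -/
def edges : ∀ {a b : V}, MGWalk ends a b → List E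
  | _, _, nil _ => []
  | _, _, cons e _ tail => e :: tail.edges

end MGWalk

/-- A DP-system on a metric graph assembled from `E`: the vertex set is finite,
no edge is a loop, the multigraph is connected, and the set of initial vertices
is nonempty. -/
def IsDPSystem {E V : Type} (ends : E → Sym2 V) (S : Set V) : Prop :=
  Finite V ∧ (∀ e, ¬ (ends e).IsDiag) ∧ (∀ a b : V, Nonempty (MGWalk ends a b)) ∧
    S.Nonempty

/-- A dynamic point is present at time `t` at distance `s` from endpoint `x` of
edge `e` (on the arc leaving `x`) iff some walk from an initial vertex to `x`
has length `t - s`. -/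
def IsPoint {E V : Type} (ends : E → Sym2 V) (l : E → ℝ) (S : Set V)
    (t : ℝ) (e : E) (x : V) (s : ℝ) : Prop :=
  x ∈ ends e ∧ 0 ≤ s ∧ s < l e ∧
    ∃ v₀ ∈ S, ∃ w : MGWalk ends v₀ x, w.length l = t - s

/-- Number of dynamic points on edge `e` at time `t`. -/
noncomputable def NptsEdge {E V : Type} (ends : E → Sym2 V) (l : E → ℝ)
    (S : Set V) (e : E) (t : ℝ) : ℕ :=
  Set.ncard {p : V × ℝ | IsPoint ends l S t e p.1 p.2}

/-- Total number of dynamic points at time `t`. -/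
noncomputable def Npts {E V : Type} (ends : E → Sym2 V) (l : E → ℝ)
    (S : Set V) (t : ℝ) : ℕ :=
  Set.ncard {p : E × V × ℝ | IsPoint ends l S t p.1 p.2.1 p.2.2}

/-- `T` is a stabilization bound: `T ≥ 0` and the total number of points is
constant from `T` on. -/
def IsStabBound {E V : Type} (ends : E → Sym2 V) (l : E → ℝ) (S : Set V)
    (T : ℝ) : Prop :=
  0 ≤ T ∧ ∀ t ≥ T, Npts ends l S t = Npts ends l S T

/-- The stabilization time: the least stabilization bound. -/
noncomputable def stabTime {E V : Type} (ends : E → Sym2 V) (l : E → ℝ)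
    (S : Set V) : ℝ :=
  sInf {T : ℝ | IsStabBound ends l S T}

/-- `T` is a stabilization bound for edge `e`. -/
def IsEdgeStabBound {E V : Type} (ends : E → Sym2 V) (l : E → ℝ) (S : Set V)
    (e : E) (T : ℝ) : Prop :=
  0 ≤ T ∧ ∀ t ≥ T, NptsEdge ends l S e t = NptsEdge ends l S e T

/-- The stabilization time of edge `e`. -/
noncomputable def edgeStabTime {E V : Type} (ends : E → Sym2 V) (l : E → ℝ)
    (S : Set V) (e : E) : ℝ :=
  sInf {T : ℝ | IsEdgeStabBound ends l S e T}

/-- Membership in `LSTDP(E)` (given the underlying system is a DP-system):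
its stabilization time is maximal among all DP-systems assembled from `E`. -/
def IsMaxStab {E : Type} (l : E → ℝ) {V : Type} (ends : E → Sym2 V)
    (S : Set V) : Prop :=
  ∀ (V' : Type) (ends' : E → Sym2 V') (S' : Set V'),
    IsDPSystem ends' S' → stabTime ends' l S' ≤ stabTime ends l S

/-- Degree of vertex `x` in the subgraph with edge set `C`. -/
noncomputable def edgeDegree {E V : Type} (ends : E → Sym2 V) (C : Set E)
    (x : V) : ℕ :=
  Set.ncard {e ∈ C | x ∈ ends e}

/-- Degree of vertex `x` in the whole graph. -/
noncomputable def degree {E V : Type} (ends : E → Sym2 V) (x : V) : ℕ :=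
  Set.ncard {e : E | x ∈ ends e}

/-- `x` is a vertex of the subgraph with edge set `C`. -/
def OnEdgeSet {E V : Type} (ends : E → Sym2 V) (C : Set E) (x : V) : Prop :=
  ∃ e ∈ C, x ∈ ends e

/-- The subgraph with edge set `C` is connected. -/
def EdgeSetConn {E V : Type} (ends : E → Sym2 V) (C : Set E) : Prop :=
  ∀ a b : V, OnEdgeSet ends C a → OnEdgeSet ends C b →
    ∃ w : MGWalk ends a b, ∀ e ∈ w.edges, e ∈ C

/-- `C` is the edge set of a cycle: nonempty, connected, and every vertex of its
support has degree exactly two in it. -/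
def IsCycleSet {E V : Type} (ends : E → Sym2 V) (C : Set E) : Prop :=
  C.Nonempty ∧ EdgeSetConn ends C ∧
    ∀ x : V, OnEdgeSet ends C x → edgeDegree ends C x = 2

/-- A bead graph: no vertex lies on two distinct cycles. -/
def IsBead {E V : Type} (ends : E → Sym2 V) : Prop :=
  ∀ C₁ C₂ : Set E, IsCycleSet ends C₁ → IsCycleSet ends C₂ → C₁ ≠ C₂ →
    ∀ x : V, ¬ (OnEdgeSet ends C₁ x ∧ OnEdgeSet ends C₂ x)

/-- The graph has no cycles. -/
def IsAcyclicG {E V : Type} (ends : E → Sym2 V) : Prop :=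
  ∀ C : Set E, ¬ IsCycleSet ends C

/-- `H` is the edge set of a path subgraph: nonempty, connected, acyclic, and
all degrees within `H` are at most two. -/
def IsPathSet {E V : Type} (ends : E → Sym2 V) (H : Set E) : Prop :=
  H.Nonempty ∧ EdgeSetConn ends H ∧ (∀ C ⊆ H, ¬ IsCycleSet ends C) ∧
    ∀ x : V, edgeDegree ends H x ≤ 2

/-- `x` is a terminal vertex of the path subgraph `H`. -/
def IsHandleTerminal {E V : Type} (ends : E → Sym2 V) (H : Set E) (x : V) : Prop :=
  edgeDegree ends H x = 1

/-- The type `W(v, e)` of walks from `v` to an endpoint of edge `e`. -/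
def WalkTo {E V : Type} (ends : E → Sym2 V) (v : V) (e : E) : Type :=
  { p : Σ x : V, MGWalk ends v x // p.1 ∈ ends e }

/-- The relation `≈` on `W(v, e)`: walks with the same final endpoint are related
iff their lengths are congruent modulo `2·l(e)`; walks with different final
endpoints are related iff the difference of their lengths is congruent to
`l(e)` modulo `2·l(e)`. -/
def wapprox {E V : Type} (ends : E → Sym2 V) (l : E → ℝ) (v : V) (e : E)
    (w₁ w₂ : WalkTo ends v e) : Prop :=
  (w₁.1.1 = w₂.1.1 ∧
    ∃ k : ℤ, w₁.1.2.length l - w₂.1.2.length l = k * (2 * l e)) ∨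
  (w₁.1.1 ≠ w₂.1.1 ∧
    ∃ k : ℤ, w₁.1.2.length l - w₂.1.2.length l - l e = k * (2 * l e))

/-!
Pick an initial vertex `r`, measure the combinatorial distance `d` to `r`, and orient every
edge from its endpoint nearer to `r` towards the farther one. Build a tree on `Unit ⊕ E`:
the root `inl ()` sits over `r`, the vertex `inr e` over the far end of `e`, and `e` hangs
from a tree vertex over its near end `x`: the root if `x = r`, otherwise `inr f` for the
first edge `f` of a shortest walk from `x` to `r`. The parent always has smaller rank, so
this is a tree, and it maps onto the original graph edge by edge. Walks from the root map to
walks of the same length from `r ∈ S`, and the induced map on dynamic points is injective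
because edges are not loops, so the tree has no more points at any time.
-/

theorem Sym2.exists_eq_mk_and_le {α β : Type*} [LinearOrder β] (f : α → β) (z : Sym2 α) :
    ∃ a b, z = s(a, b) ∧ f a ≤ f b := by
  induction z using Sym2.ind with
  | h a b =>
    rcases le_total (f a) (f b) with h | h
    · exact ⟨a, b, rfl, h⟩
    · exact ⟨b, a, Sym2.eq_swap, h⟩

theorem Sym2.eq_and_eq_of_mk_eq_mk {α β : Type*} [Preorder β] (f : α → β) {a b x y : α}
    (h : s(a, b) = s(x, y)) (hab : f a ≤ f b) (hxy : f x < f y) : a = x ∧ b = y := by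
  rcases Sym2.eq_iff.mp h with h | ⟨rfl, rfl⟩
  · exact h
  · exact absurd (hab.trans_lt hxy) (lt_irrefl _)

namespace MGWalk

variable {E V : Type} {ends : E → Sym2 V}

def append : ∀ {a b c : V}, MGWalk ends a b → MGWalk ends b c → MGWalk ends a c
  | _, _, _, nil _, w => w
  | _, _, _, cons e h t, w => cons e h (t.append w)

def reverse : ∀ {a b : V}, MGWalk ends a b → MGWalk ends b a
  | _, _, nil a => nil a
  | _, _, cons e h t => t.reverse.append (cons e (h.trans Sym2.eq_swap) (nil _))

theorem nonempty_of_forall_nonempty_to {r : V} (h : ∀ x, Nonempty (MGWalk ends x r))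
    (a b : V) : Nonempty (MGWalk ends a b) :=
  let ⟨wa⟩ := h a
  let ⟨wb⟩ := h b
  ⟨wa.append wb.reverse⟩

theorem length_eq_sum (l : E → ℝ) : ∀ {a b : V} (w : MGWalk ends a b),
    w.length l = (w.edges.map l).sum
  | _, _, nil _ => by simp [length, edges]
  | _, _, cons e h t => by simp [length, edges, length_eq_sum l t]

theorem mul_length_edges_le_length {l : E → ℝ} {δ : ℝ} (hδ : ∀ e, δ ≤ l e) :
    ∀ {a b : V} (w : MGWalk ends a b), δ * w.edges.length ≤ w.length l
  | _, _, nil _ => by simp [length, edges]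
  | _, _, cons e h t => by
    have := mul_length_edges_le_length hδ t
    simp only [edges, length, List.length_cons, Nat.cast_succ]
    linarith [hδ e]

def map {V' : Type} {ends' : E → Sym2 V'} (φ : V' → V)
    (hφ : ∀ e, ends e = (ends' e).map φ) :
    ∀ {a b : V'}, MGWalk ends' a b → MGWalk ends (φ a) (φ b)
  | _, _, nil a => nil (φ a)
  | _, _, cons e h t => cons e (by rw [hφ, h, Sym2.map_mk]) (map φ hφ t)

theorem length_map {V' : Type} {ends' : E → Sym2 V'} (φ : V' → V)
    (hφ : ∀ e, ends e = (ends' e).map φ) (l : E → ℝ) :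
    ∀ {a b : V'} (w : MGWalk ends' a b), (w.map φ hφ).length l = w.length l
  | _, _, nil _ => rfl
  | _, _, cons e h t => by simp [map, length, length_map φ hφ l t]

end MGWalk

section PointCount

variable {E V : Type} {ends : E → Sym2 V} {l : E → ℝ}

theorem finite_setOf_isPoint [Finite E] [Finite V] (hl : ∀ e, 0 < l e) (S : Set V) (t : ℝ) :
    {q : E × V × ℝ | IsPoint ends l S t q.1 q.2.1 q.2.2}.Finite := by
  obtain ⟨δ, hδ, hδl⟩ : ∃ δ > 0, ∀ e, δ ≤ l e := by
    rcases isEmpty_or_nonempty E with hE | hE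
    · exact ⟨1, one_pos, isEmptyElim⟩
    · obtain ⟨e₀, he₀⟩ := Finite.exists_min l
      exact ⟨l e₀, hl e₀, he₀⟩
  -- a walk of length at most `t` has at most `t / δ` edges, and it determines `s`
  set N := ⌈t / δ⌉₊
  have hlists : ((fun L : List E => t - (L.map l).sum) '' {L | L.length ≤ N}).Finite :=
    (List.finite_length_le E N).image _
  refine (Set.finite_univ.prod (Set.finite_univ.prod hlists)).subset ?_
  rintro ⟨e, x, s⟩ ⟨-, hs, -, _, _, w, hw⟩
  refine ⟨trivial, trivial, w.edges, ?_, by simp only [← MGWalk.length_eq_sum, hw]; ring⟩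
  have hbound : δ * w.edges.length ≤ t := by
    linarith [MGWalk.mul_length_edges_le_length hδl w]
  have : (w.edges.length : ℝ) ≤ t / δ := by
    rw [le_div_iff₀ hδ]
    linarith
  exact_mod_cast this.trans (Nat.le_ceil _)

variable {V' : Type} {ends' : E → Sym2 V'}

theorem IsPoint.map {S' : Set V'} {S : Set V} {t : ℝ} {e : E} {x : V'} {s : ℝ} (φ : V' → V)
    (hφ : ∀ e, ends e = (ends' e).map φ) (hS : Set.MapsTo φ S' S)
    (h : IsPoint ends' l S' t e x s) : IsPoint ends l S t e (φ x) s := by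
  obtain ⟨hx, hs₀, hsl, v, hv, w, hw⟩ := h
  refine ⟨?_, hs₀, hsl, φ v, hS hv, w.map φ hφ, (MGWalk.length_map φ hφ l w).trans hw⟩
  rw [hφ]
  exact Sym2.mem_map.mpr ⟨x, hx, rfl⟩

theorem npts_le_of_map {S' : Set V'} {S : Set V} (φ : V' → V)
    (hφ : ∀ e, ends e = (ends' e).map φ) (hloop : ∀ e, ¬ (ends e).IsDiag)
    (hS : Set.MapsTo φ S' S) {t : ℝ}
    (hfin : {q : E × V × ℝ | IsPoint ends l S t q.1 q.2.1 q.2.2}.Finite) :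
    Npts ends' l S' t ≤ Npts ends l S t := by
  refine Set.ncard_le_ncard_of_injOn (fun q => (q.1, φ q.2.1, q.2.2))
    (fun q hq => hq.map φ hφ hS) ?_ hfin
  rintro ⟨e, x₁, s⟩ ⟨hx₁, -⟩ ⟨e', x₂, s'⟩ ⟨hx₂, -⟩ heq
  obtain ⟨rfl, hφx, rfl⟩ : e = e' ∧ φ x₁ = φ x₂ ∧ s = s' := by
    simpa only [Prod.mk.injEq] using heq
  by_contra hne
  have hx : x₁ ≠ x₂ := fun h => hne (by rw [h])
  apply hloop e
  rw [hφ, (Sym2.mem_and_mem_iff hx).mp ⟨hx₁, hx₂⟩, Sym2.map_mk, Sym2.mk_isDiag_iff]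
  exact hφx

end PointCount

section ParentTree

variable {E : Type}

def parentEnds (p : E → Unit ⊕ E) (e : E) : Sym2 (Unit ⊕ E) := s(p e, .inr e)

variable {p : E → Unit ⊕ E} {ρ : Unit ⊕ E → ℕ}

theorem parentEnds_not_isDiag (hρ : ∀ e, ρ (p e) < ρ (.inr e)) (e : E) :
    ¬ (parentEnds p e).IsDiag := by
  rw [parentEnds, Sym2.mk_isDiag_iff]
  exact fun h => (hρ e).ne (congrArg ρ h)

theorem nonempty_walk_parentEnds_root (hρ : ∀ e, ρ (p e) < ρ (.inr e)) (x : Unit ⊕ E) :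
    Nonempty (MGWalk (parentEnds p) x (.inl ())) := by
  induction hx : ρ x using Nat.strong_induction_on generalizing x with
  | _ n ih =>
    rcases x with ⟨⟩ | e
    · exact ⟨.nil _⟩
    · obtain ⟨w⟩ := ih (ρ (p e)) (hx ▸ hρ e) (p e) rfl
      exact ⟨.cons e Sym2.eq_swap w⟩

theorem parentEnds_isAcyclicG [Finite E] (hρ : ∀ e, ρ (p e) < ρ (.inr e)) :
    IsAcyclicG (parentEnds p) := by
  rintro C ⟨⟨f, hf⟩, -, hdeg⟩
  obtain ⟨x, hx, hmax⟩ := Set.exists_max_image {x | OnEdgeSet (parentEnds p) C x} ρ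
    (Set.toFinite _) ⟨.inr f, f, hf, Sym2.mem_mk_right _ _⟩
  -- at a support vertex of maximal rank every edge of `C` is the edge to its parent
  have hchild : ∀ g ∈ C, x ∈ parentEnds p g → x = .inr g := by
    intro g hg hxg
    rcases Sym2.mem_iff.mp hxg with rfl | h
    · exact absurd (hmax _ ⟨g, hg, Sym2.mem_mk_right _ _⟩) (not_le.mpr (hρ g))
    · exact h
  have hle : edgeDegree (parentEnds p) C x ≤ 1 := by
    refine (Set.ncard_le_one_iff (Set.toFinite _)).mpr fun hg hg' => ?_
    exact Sum.inr_injective ((hchild _ hg.1 hg.2).symm.trans (hchild _ hg'.1 hg'.2))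
  have := hdeg x hx
  omega

theorem parentEnds_isDPSystem [Finite E] (hρ : ∀ e, ρ (p e) < ρ (.inr e)) :
    IsDPSystem (parentEnds p) {.inl ()} :=
  ⟨inferInstance, parentEnds_not_isDiag hρ,
    MGWalk.nonempty_of_forall_nonempty_to (nonempty_walk_parentEnds_root hρ),
    Set.singleton_nonempty _⟩

end ParentTree

section WalkDist

variable {E V : Type} (ends : E → Sym2 V) (r : V)

/-- Junk value `0` when there is no walk from `x` to `r`. -/
noncomputable def walkDist (x : V) : ℕ :=
  sInf {n | ∃ w : MGWalk ends x r, w.edges.length = n}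

theorem walkDist_le {x : V} (w : MGWalk ends x r) : walkDist ends r x ≤ w.edges.length :=
  Nat.sInf_le ⟨w, rfl⟩

theorem exists_walk_edges_length_eq_walkDist {x : V} (h : Nonempty (MGWalk ends x r)) :
    ∃ w : MGWalk ends x r, w.edges.length = walkDist ends r x :=
  let ⟨w⟩ := h
  Nat.sInf_mem (s := {n | ∃ w : MGWalk ends x r, w.edges.length = n}) ⟨_, w, rfl⟩

theorem exists_edge_walkDist_lt {x : V} (hx : x ≠ r) (h : Nonempty (MGWalk ends x r)) :
    ∃ f y, ends f = s(y, x) ∧ walkDist ends r y < walkDist ends r x := by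
  obtain ⟨w, hw⟩ := exists_walk_edges_length_eq_walkDist ends r h
  cases w with
  | nil => exact absurd rfl hx
  | cons f hf tail =>
    refine ⟨f, _, hf.trans Sym2.eq_swap, ?_⟩
    have := walkDist_le ends r tail
    simp only [MGWalk.edges, List.length_cons] at hw
    omega

theorem exists_parentEnds_cover (hconn : ∀ x, Nonempty (MGWalk ends x r)) :
    ∃ (p : E → Unit ⊕ E) (ρ : Unit ⊕ E → ℕ) (φ : Unit ⊕ E → V),
      φ (.inl ()) = r ∧ (∀ e, ρ (p e) < ρ (.inr e)) ∧
        ∀ e, ends e = (parentEnds p e).map φ := by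
  classical
  set d := walkDist ends r
  choose a b hab had using fun e => Sym2.exists_eq_mk_and_le d (ends e)
  choose parent y hparent hy using
    fun x : {x // x ≠ r} => exists_edge_walkDist_lt ends r x.2 (hconn x)
  let φ : Unit ⊕ E → V := Sum.elim (fun _ => r) b
  let ρ : Unit ⊕ E → ℕ := Sum.elim (fun _ => 0) (fun e => d (a e) + 1)
  -- the tree vertex over `x`, of rank at most `d x`
  let lift : V → Unit ⊕ E := fun x => if hx : x = r then .inl () else .inr (parent ⟨x, hx⟩)
  have hlift : ∀ x, φ (lift x) = x ∧ ρ (lift x) ≤ d x := by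
    intro x
    by_cases hx : x = r
    · subst hx
      simp [lift, φ, ρ]
    · obtain ⟨hya, hxb⟩ := Sym2.eq_and_eq_of_mk_eq_mk d
        ((hab _).symm.trans (hparent ⟨x, hx⟩)) (had _) (hy ⟨x, hx⟩)
      simp only [lift, hx, dite_false, φ, ρ, Sum.elim_inr, hxb, hya, true_and]
      exact hy ⟨x, hx⟩
  refine ⟨fun e => lift (a e), ρ, φ, rfl,
    fun e => (hlift (a e)).2.trans_lt (Nat.lt_succ_self _), fun e => ?_⟩
  rw [hab e, parentEnds, Sym2.map_mk, (hlift (a e)).1]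
  rfl

end WalkDist

/-- for any DP-system on a connected metric graph assembled from `E`
with positive real lengths, there is a DP-system on a tree assembled from `E` with
a single initial vertex whose number of points never exceeds that of the original. -/
theorem stmt1 {E : Type} [Fintype E] (l : E → ℝ) (hl : ∀ e, 0 < l e)
    {V : Type} (ends : E → Sym2 V) (S : Set V) (hP : IsDPSystem ends S) :
    ∃ (V' : Type) (ends' : E → Sym2 V') (v₀ : V'),
      IsDPSystem ends' {v₀} ∧
      IsAcyclicG ends' ∧
      ∀ t : ℝ, 0 ≤ t → Npts ends' l {v₀} t ≤ Npts ends l S t := by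
  obtain ⟨hV, hloop, hconn, r, hr⟩ := hP
  obtain ⟨p, ρ, φ, hφr, hρ, hφ⟩ := exists_parentEnds_cover ends r fun x => hconn x r
  refine ⟨Unit ⊕ E, parentEnds p, .inl (), parentEnds_isDPSystem hρ,
    parentEnds_isAcyclicG hρ, fun t _ => ?_⟩
  refine npts_le_of_map φ hφ hloop ?_ (finite_setOf_isPoint hl S t)
  rintro _ rfl
  exact hφr ▸ hr
end

section
/- Let Γ be a metric graph assembled from a finite edge set E with positive integer length function l, and consider the DP-system on Γ with a single initial vertex v_0. Then the stabilization time of the system equals the maximum, over all edges e ∈ E and all equivalence classes C of the relation ≈ on W(v_0, e), of the minimal length of a walk in C; in particular this maximum is finite. -/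
namespace Stmt11Aux

variable {E V : Type} {ends : E → Sym2 V}

/-- Natural-number length of a walk. -/
def nlen (l : E → ℕ) : ∀ {a b : V}, MGWalk ends a b → ℕ
  | _, _, .nil _ => 0
  | _, _, .cons e _ tail => l e + nlen l tail

lemma length_eq_nlen (l : E → ℕ) : ∀ {a b : V} (w : MGWalk ends a b),
    w.length (fun e => (l e : ℝ)) = (nlen l w : ℝ)
  | _, _, .nil _ => by simp [MGWalk.length, nlen]
  | _, _, .cons e h tail => by
      simp [MGWalk.length, nlen, length_eq_nlen l tail]

def concat : ∀ {a b c : V}, MGWalk ends a b → (e : E) → ends e = s(b, c) →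
    MGWalk ends a c
  | _, _, _, .nil _, e, h => .cons e h (.nil _)
  | _, _, _, .cons e' h' tail, e, h => .cons e' h' (concat tail e h)

lemma nlen_concat (l : E → ℕ) : ∀ {a b c : V} (w : MGWalk ends a b) (e : E)
    (h : ends e = s(b, c)), nlen l (concat w e h) = nlen l w + l e
  | _, _, _, .nil _, e, h => by simp [concat, nlen]
  | _, _, _, .cons e' h' tail, e, h => by
      simp [concat, nlen, nlen_concat l tail e h]; ring

lemma exists_int_iff {n₁ n₂ d : ℕ} :
    (∃ k : ℤ, (n₁ : ℝ) - (n₂ : ℝ) = k * (d : ℝ)) ↔ ((n₁ : ZMod d) = (n₂ : ZMod d)) := by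
  rw [ZMod.natCast_eq_natCast_iff, Nat.modEq_iff_dvd]
  constructor
  · rintro ⟨k, hk⟩
    have hk' : (n₁ : ℤ) - n₂ = k * d := by exact_mod_cast hk
    exact ⟨-k, by rw [mul_neg, mul_comm]; linarith⟩
  · rintro ⟨k, hk⟩
    refine ⟨-k, ?_⟩
    have h2 : (n₁ : ℤ) - n₂ = (-k) * d := by rw [neg_mul, mul_comm]; linarith
    exact_mod_cast h2

open Classical in
/-- Invariant of a walk under `wapprox`, given a chosen endpoint `a` of `e`. -/
noncomputable def finv (l : E → ℕ) (v₀ : V) (e : E) (a : V)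
    (w : WalkTo ends v₀ e) : ZMod (2 * l e) :=
  (nlen l w.1.2 : ZMod (2 * l e)) + (if w.1.1 = a then 0 else (l e : ZMod (2 * l e)))

lemma le_add_le (e : E) (l : E → ℕ) :
    (l e : ZMod (2 * l e)) + (l e : ZMod (2 * l e)) = 0 := by
  have h : ((2 * l e : ℕ) : ZMod (2 * l e)) = 0 := ZMod.natCast_self _
  push_cast at h
  linear_combination h

lemma wapprox_iff_finv (l : E → ℕ) (v₀ : V) (e : E) {a b : V}
    (hab : ends e = s(a, b)) (hne : a ≠ b) (w₁ w₂ : WalkTo ends v₀ e) :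
    wapprox ends (fun e => (l e : ℝ)) v₀ e w₁ w₂ ↔
      finv l v₀ e a w₁ = finv l v₀ e a w₂ := by
  obtain ⟨⟨x₁, u₁⟩, hm₁⟩ := w₁
  obtain ⟨⟨x₂, u₂⟩, hm₂⟩ := w₂
  have hx₁ : x₁ = a ∨ x₁ = b := by rw [hab] at hm₁; exact Sym2.mem_iff.mp hm₁
  have hx₂ : x₂ = a ∨ x₂ = b := by rw [hab] at hm₂; exact Sym2.mem_iff.mp hm₂
  set n₁ := nlen l u₁ with hn₁
  set n₂ := nlen l u₂ with hn₂
  have hlen₁ : u₁.length (fun e => (l e : ℝ)) = (n₁ : ℝ) := length_eq_nlen l u₁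
  have hlen₂ : u₂.length (fun e => (l e : ℝ)) = (n₂ : ℝ) := length_eq_nlen l u₂
  have key₁ : (∃ k : ℤ, (n₁ : ℝ) - (n₂ : ℝ) = k * (2 * (l e : ℝ))) ↔
      ((n₁ : ZMod (2 * l e)) = (n₂ : ZMod (2 * l e))) := by
    have h := exists_int_iff (n₁ := n₁) (n₂ := n₂) (d := 2 * l e)
    push_cast at h
    exact h
  have key₂ : (∃ k : ℤ, (n₁ : ℝ) - (n₂ : ℝ) - (l e : ℝ) = k * (2 * (l e : ℝ))) ↔
      ((n₁ : ZMod (2 * l e)) = (n₂ : ZMod (2 * l e)) + (l e : ZMod (2 * l e))) := by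
    have h := exists_int_iff (n₁ := n₁) (n₂ := n₂ + l e) (d := 2 * l e)
    push_cast at h
    rw [← h]
    constructor <;> (rintro ⟨k, hk⟩; exact ⟨k, by linarith⟩)
  have hzz : (l e : ZMod (2 * l e)) + (l e : ZMod (2 * l e)) = 0 := le_add_le e l
  simp only [wapprox, finv, hlen₁, hlen₂]
  have hba : b ≠ a := Ne.symm hne
  rcases hx₁ with h1 | h1 <;> rcases hx₂ with h2 | h2
  · -- x₁ = a, x₂ = a
    rw [if_pos h1, if_pos h2, add_zero, add_zero]
    constructor
    · rintro (⟨-, hk⟩ | ⟨hne', -⟩)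
      · exact key₁.mp hk
      · exact absurd (h1.trans h2.symm) hne'
    · intro h
      exact Or.inl ⟨h1.trans h2.symm, key₁.mpr h⟩
  · -- x₁ = a, x₂ = b
    have hx12 : x₁ ≠ x₂ := by rw [h1, h2]; exact hne
    rw [if_pos h1, if_neg (by rw [h2]; exact hba), add_zero]
    constructor
    · rintro (⟨he, -⟩ | ⟨-, hk⟩)
      · exact absurd he hx12
      · exact key₂.mp hk
    · intro h
      exact Or.inr ⟨hx12, key₂.mpr h⟩
  · -- x₁ = b, x₂ = a
    have hx12 : x₁ ≠ x₂ := by rw [h1, h2]; exact hba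
    rw [if_neg (by rw [h1]; exact hba), if_pos h2, add_zero]
    have conv : ((n₁ : ZMod (2 * l e)) = (n₂ : ZMod (2 * l e)) + (l e : ZMod (2 * l e)))
        ↔ ((n₁ : ZMod (2 * l e)) + (l e : ZMod (2 * l e)) = (n₂ : ZMod (2 * l e))) := by
      constructor <;> intro hh
      · linear_combination hh + hzz
      · linear_combination hh - hzz
    constructor
    · rintro (⟨he, -⟩ | ⟨-, hk⟩)
      · exact absurd he hx12
      · exact conv.mp (key₂.mp hk)
    · intro h
      exact Or.inr ⟨hx12, key₂.mpr (conv.mpr h)⟩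
  · -- x₁ = b, x₂ = b
    rw [if_neg (by rw [h1]; exact hba), if_neg (by rw [h2]; exact hba)]
    constructor
    · rintro (⟨-, hk⟩ | ⟨hne', -⟩)
      · rw [key₁.mp hk]
      · exact absurd (h1.trans h2.symm) hne'
    · intro h
      exact Or.inl ⟨h1.trans h2.symm, key₁.mpr (by exact add_right_cancel h)⟩

lemma sym2_decomp {V : Type} (z : Sym2 V) : ∃ a b, z = s(a, b) := by
  induction z using Sym2.ind with
  | _ a b => exact ⟨a, b, rfl⟩

lemma class_eq_iff_wapprox (l : E → ℕ) (v₀ : V) (e : E) (hnl : ¬ (ends e).IsDiag)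
    (w₁ w₂ : WalkTo ends v₀ e) :
    Quot.mk (wapprox ends (fun e => (l e : ℝ)) v₀ e) w₁ =
      Quot.mk (wapprox ends (fun e => (l e : ℝ)) v₀ e) w₂ ↔
    wapprox ends (fun e => (l e : ℝ)) v₀ e w₁ w₂ := by
  obtain ⟨a, b, hab⟩ := sym2_decomp (ends e)
  have hne : a ≠ b := fun h => hnl (by rw [hab, h]; exact Sym2.mk_isDiag_iff.mpr rfl)
  have hresp : ∀ u v : WalkTo ends v₀ e, wapprox ends (fun e => (l e : ℝ)) v₀ e u v →
      finv l v₀ e a u = finv l v₀ e a v :=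
    fun u v h => (wapprox_iff_finv l v₀ e hab hne u v).mp h
  constructor
  · intro h
    have := congrArg (Quot.lift (finv l v₀ e a) hresp) h
    exact (wapprox_iff_finv l v₀ e hab hne w₁ w₂).mpr this
  · exact Quot.sound

lemma finite_quot (l : E → ℕ) (v₀ : V) (e : E) (hl : 0 < l e)
    (hnl : ¬ (ends e).IsDiag) :
    Finite (Quot (wapprox ends (fun e => (l e : ℝ)) v₀ e)) := by
  obtain ⟨a, b, hab⟩ := sym2_decomp (ends e)
  have hne : a ≠ b := fun h => hnl (by rw [hab, h]; exact Sym2.mk_isDiag_iff.mpr rfl)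
  have hresp : ∀ u v : WalkTo ends v₀ e, wapprox ends (fun e => (l e : ℝ)) v₀ e u v →
      finv l v₀ e a u = finv l v₀ e a v :=
    fun u v h => (wapprox_iff_finv l v₀ e hab hne u v).mp h
  haveI : NeZero (2 * l e) := ⟨by omega⟩
  apply Finite.of_injective (Quot.lift (finv l v₀ e a) hresp)
  intro q₁ q₂ h
  induction q₁ using Quot.ind with | _ w₁ => ?_
  induction q₂ using Quot.ind with | _ w₂ => ?_
  exact Quot.sound ((wapprox_iff_finv l v₀ e hab hne w₁ w₂).mpr h)

/-- The set of (natural) lengths of walks in a class. -/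
def clens (l : E → ℕ) (v₀ : V) (e : E)
    (C : Quot (wapprox ends (fun e => (l e : ℝ)) v₀ e)) : Set ℕ :=
  {n | ∃ w : WalkTo ends v₀ e,
    Quot.mk (wapprox ends (fun e => (l e : ℝ)) v₀ e) w = C ∧ nlen l w.1.2 = n}

noncomputable def mlen (l : E → ℕ) (v₀ : V) (e : E)
    (C : Quot (wapprox ends (fun e => (l e : ℝ)) v₀ e)) : ℕ :=
  sInf (clens l v₀ e C)

lemma clens_nonempty (l : E → ℕ) (v₀ : V) (e : E)
    (C : Quot (wapprox ends (fun e => (l e : ℝ)) v₀ e)) :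
    (clens l v₀ e C).Nonempty := by
  obtain ⟨w, hw⟩ := Quot.exists_rep C
  exact ⟨nlen l w.1.2, w, hw, rfl⟩

lemma mlen_mem (l : E → ℕ) (v₀ : V) (e : E)
    (C : Quot (wapprox ends (fun e => (l e : ℝ)) v₀ e)) :
    mlen l v₀ e C ∈ clens l v₀ e C :=
  Nat.sInf_mem (clens_nonempty l v₀ e C)

lemma mlen_le (l : E → ℕ) (v₀ : V) (e : E)
    {C : Quot (wapprox ends (fun e => (l e : ℝ)) v₀ e)} {w : WalkTo ends v₀ e}
    (hw : Quot.mk (wapprox ends (fun e => (l e : ℝ)) v₀ e) w = C) :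
    mlen l v₀ e C ≤ nlen l w.1.2 :=
  Nat.sInf_le ⟨w, hw, rfl⟩

lemma extend (l : E → ℕ) (v₀ : V) (e : E) (hnl : ¬ (ends e).IsDiag)
    (w : WalkTo ends v₀ e) :
    ∃ w' : WalkTo ends v₀ e,
      Quot.mk (wapprox ends (fun e => (l e : ℝ)) v₀ e) w' =
        Quot.mk (wapprox ends (fun e => (l e : ℝ)) v₀ e) w ∧
      nlen l w'.1.2 = nlen l w.1.2 + l e := by
  obtain ⟨⟨x, u⟩, hm⟩ := w
  have hy : s(x, Sym2.Mem.other hm) = ends e := Sym2.other_spec hm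
  set y := Sym2.Mem.other hm with hydef
  have hym : y ∈ ends e := by rw [← hy]; exact Sym2.mem_mk_right x y
  have hxy : x ≠ y := fun h => hnl (by rw [← hy, h]; exact Sym2.mk_isDiag_iff.mpr rfl)
  refine ⟨⟨⟨y, concat u e hy.symm⟩, hym⟩, ?_, ?_⟩
  · apply Quot.sound
    refine Or.inr ⟨hxy.symm, 0, ?_⟩
    rw [length_eq_nlen, length_eq_nlen, nlen_concat]
    push_cast
    ring
  · exact nlen_concat l u e hy.symm

lemma extend_many (l : E → ℕ) (v₀ : V) (e : E) (hnl : ¬ (ends e).IsDiag)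
    (w : WalkTo ends v₀ e) (k : ℕ) :
    ∃ w' : WalkTo ends v₀ e,
      Quot.mk (wapprox ends (fun e => (l e : ℝ)) v₀ e) w' =
        Quot.mk (wapprox ends (fun e => (l e : ℝ)) v₀ e) w ∧
      nlen l w'.1.2 = nlen l w.1.2 + k * l e := by
  induction k with
  | zero => exact ⟨w, rfl, by ring⟩
  | succ k ih =>
      obtain ⟨w', hq, hn⟩ := ih
      obtain ⟨w'', hq', hn'⟩ := extend l v₀ e hnl w'
      exact ⟨w'', hq'.trans hq, by rw [hn', hn]; ring⟩

lemma interval_eq (l : E → ℕ) (v₀ : V) (e : E) (hl : 0 < l e)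
    (hnl : ¬ (ends e).IsDiag) (w₁ w₂ : WalkTo ends v₀ e)
    (hq : Quot.mk (wapprox ends (fun e => (l e : ℝ)) v₀ e) w₁ =
      Quot.mk (wapprox ends (fun e => (l e : ℝ)) v₀ e) w₂)
    {t : ℝ} (h₁l : t - l e < nlen l w₁.1.2) (h₁u : (nlen l w₁.1.2 : ℝ) ≤ t)
    (h₂l : t - l e < nlen l w₂.1.2) (h₂u : (nlen l w₂.1.2 : ℝ) ≤ t) :
    w₁.1.1 = w₂.1.1 ∧ nlen l w₁.1.2 = nlen l w₂.1.2 := by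
  have hw := (class_eq_iff_wapprox l v₀ e hnl w₁ w₂).mp hq
  set n₁ := nlen l w₁.1.2
  set n₂ := nlen l w₂.1.2
  have hle : (0:ℝ) < l e := by exact_mod_cast hl
  have habs : |(n₁ : ℝ) - n₂| < l e := abs_lt.mpr ⟨by linarith, by linarith⟩
  rcases hw with ⟨hxx, k, hk⟩ | ⟨hxx, k, hk⟩
  · rw [length_eq_nlen, length_eq_nlen] at hk
    beta_reduce at hk
    have hk0 : k = 0 := by
      by_contra h0
      have h1 : (1:ℝ) ≤ |(k:ℝ)| := by exact_mod_cast Int.one_le_abs h0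
      rw [hk] at habs
      rw [abs_mul, abs_of_pos (by linarith : (0:ℝ) < 2 * l e)] at habs
      have := mul_le_mul_of_nonneg_right h1 (by linarith : (0:ℝ) ≤ 2 * l e)
      linarith
    rw [hk0] at hk
    push_cast at hk
    have : (n₁ : ℝ) = n₂ := by linarith
    exact ⟨hxx, by exact_mod_cast this⟩
  · exfalso
    rw [length_eq_nlen, length_eq_nlen] at hk
    beta_reduce at hk
    have hk0 : k = 0 := by
      by_contra h0
      have h1 : (1:ℝ) ≤ |(k:ℝ)| := by exact_mod_cast Int.one_le_abs h0
      have h2 : |(n₁ : ℝ) - n₂ - l e| < 2 * l e := by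
        rw [abs_lt] at habs ⊢
        constructor <;> linarith [habs.1, habs.2]
      rw [hk, abs_mul, abs_of_pos (by linarith : (0:ℝ) < 2 * l e)] at h2
      have := mul_le_mul_of_nonneg_right h1 (by linarith : (0:ℝ) ≤ 2 * l e)
      linarith
    rw [hk0] at hk
    push_cast at hk
    rw [abs_lt] at habs
    linarith [habs.2]

lemma exists_mlen (l : E → ℕ) (v₀ : V) (e : E)
    (C : Quot (wapprox ends (fun e => (l e : ℝ)) v₀ e)) :
    ∃ w : WalkTo ends v₀ e,
      Quot.mk (wapprox ends (fun e => (l e : ℝ)) v₀ e) w = C ∧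
      nlen l w.1.2 = mlen l v₀ e C := by
  have h := mlen_mem l v₀ e C
  simpa [clens, Set.mem_setOf_eq] using h

/-- Forward map: a dynamic point to its class. -/
noncomputable def gpt (l : E → ℕ) (v₀ : V)
    (hWne : ∀ e : E, Nonempty (WalkTo ends v₀ e)) (t : ℝ) (p : E × V × ℝ) :
    Σ e : E, Quot (wapprox ends (fun e => (l e : ℝ)) v₀ e) := by
  classical
  exact if h : ∃ w : WalkTo ends v₀ p.1, w.1.1 = p.2.1 ∧ (nlen l w.1.2 : ℝ) = t - p.2.2
    then ⟨p.1, Quot.mk _ h.choose⟩ else ⟨p.1, Quot.mk _ (hWne p.1).some⟩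

lemma gpt_spec (l : E → ℕ) (v₀ : V)
    (hWne : ∀ e : E, Nonempty (WalkTo ends v₀ e)) (t : ℝ) (p : E × V × ℝ)
    (h : ∃ w : WalkTo ends v₀ p.1, w.1.1 = p.2.1 ∧ (nlen l w.1.2 : ℝ) = t - p.2.2) :
    ∃ w : WalkTo ends v₀ p.1, w.1.1 = p.2.1 ∧ (nlen l w.1.2 : ℝ) = t - p.2.2 ∧
      gpt l v₀ hWne t p = ⟨p.1, Quot.mk _ w⟩ := by
  refine ⟨h.choose, h.choose_spec.1, h.choose_spec.2, ?_⟩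
  unfold gpt
  rw [dif_pos h]

/-- Backward map: a class to a dynamic point. -/
noncomputable def hpt (l : E → ℕ) (v₀ : V) (hnl : ∀ e, ¬ (ends e).IsDiag) (t : ℝ)
    (k : Σ e : E, Quot (wapprox ends (fun e => (l e : ℝ)) v₀ e)) : E × V × ℝ :=
  let w' := (extend_many l v₀ k.1 (hnl k.1) (exists_mlen l v₀ k.1 k.2).choose
      ⌊(t - (mlen l v₀ k.1 k.2 : ℝ)) / (l k.1 : ℝ)⌋₊).choose
  (k.1, w'.1.1, t - (nlen l w'.1.2 : ℝ))

lemma hpt_spec (l : E → ℕ) (v₀ : V) (hnl : ∀ e, ¬ (ends e).IsDiag) (t : ℝ)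
    (k : Σ e : E, Quot (wapprox ends (fun e => (l e : ℝ)) v₀ e)) :
    ∃ w' : WalkTo ends v₀ k.1,
      Quot.mk (wapprox ends (fun e => (l e : ℝ)) v₀ k.1) w' = k.2 ∧
      nlen l w'.1.2 = mlen l v₀ k.1 k.2 +
        ⌊(t - (mlen l v₀ k.1 k.2 : ℝ)) / (l k.1 : ℝ)⌋₊ * l k.1 ∧
      hpt l v₀ hnl t k = (k.1, w'.1.1, t - (nlen l w'.1.2 : ℝ)) := by
  set w₀ := (exists_mlen l v₀ k.1 k.2).choose with hw₀
  have hw₀s := (exists_mlen l v₀ k.1 k.2).choose_spec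
  set q := ⌊(t - (mlen l v₀ k.1 k.2 : ℝ)) / (l k.1 : ℝ)⌋₊ with hq
  set w' := (extend_many l v₀ k.1 (hnl k.1) w₀ q).choose with hw'
  have hw's := (extend_many l v₀ k.1 (hnl k.1) w₀ q).choose_spec
  refine ⟨w', hw's.1.trans hw₀s.1, ?_, rfl⟩
  rw [hw's.2, hw₀s.2]

/-- Floor arithmetic: the length of the representative produced by `hpt`. -/
lemma floor_bounds {m le : ℕ} (hle : 0 < le) {t : ℝ} (hmt : (m : ℝ) ≤ t) :
    ((m + ⌊(t - (m : ℝ)) / (le : ℝ)⌋₊ * le : ℕ) : ℝ) ≤ t ∧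
    t - le < ((m + ⌊(t - (m : ℝ)) / (le : ℝ)⌋₊ * le : ℕ) : ℝ) := by
  have hle' : (0:ℝ) < le := by exact_mod_cast hle
  set q := ⌊(t - (m : ℝ)) / (le : ℝ)⌋₊ with hq
  have h1 : (q : ℝ) ≤ (t - m) / le := Nat.floor_le (div_nonneg (by linarith) hle'.le)
  have h2 : (t - m) / le < q + 1 := Nat.lt_floor_add_one _
  have h1' : (q : ℝ) * le ≤ t - m := (le_div_iff₀ hle').mp h1
  have h2' : t - m < (q + 1) * le := by
    rw [div_lt_iff₀ hle'] at h2
    exact h2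
  constructor
  · push_cast; linarith
  · push_cast; nlinarith

lemma npts_eq (l : E → ℕ) (hl : ∀ e, 0 < l e) (v₀ : V)
    (hnl : ∀ e, ¬ (ends e).IsDiag) (hconn : ∀ a b : V, Nonempty (MGWalk ends a b))
    (hKfin : Finite (Σ e : E, Quot (wapprox ends (fun e => (l e : ℝ)) v₀ e)))
    (t : ℝ) :
    Npts ends (fun e => (l e : ℝ)) ({v₀} : Set V) t =
      Set.ncard {k : Σ e : E, Quot (wapprox ends (fun e => (l e : ℝ)) v₀ e) |
        (mlen l v₀ k.1 k.2 : ℝ) ≤ t} := by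
  classical
  have hWne : ∀ e : E, Nonempty (WalkTo ends v₀ e) := by
    intro e
    obtain ⟨a, b, hab⟩ := sym2_decomp (ends e)
    obtain ⟨w⟩ := hconn v₀ a
    exact ⟨⟨⟨a, w⟩, by rw [hab]; exact Sym2.mem_mk_left a b⟩⟩
  set P : Set (E × V × ℝ) :=
    {p | IsPoint ends (fun e => (l e : ℝ)) {v₀} t p.1 p.2.1 p.2.2} with hPdef
  set Kt : Set (Σ e : E, Quot (wapprox ends (fun e => (l e : ℝ)) v₀ e)) :=
    {k | (mlen l v₀ k.1 k.2 : ℝ) ≤ t} with hKtdef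
  have hKtfin : Kt.Finite := Set.toFinite _
  have hcondP : ∀ p ∈ P, ∃ w : WalkTo ends v₀ p.1,
      w.1.1 = p.2.1 ∧ (nlen l w.1.2 : ℝ) = t - p.2.2 := by
    rintro ⟨e, x, s⟩ hp
    simp only [hPdef, Set.mem_setOf_eq] at hp
    obtain ⟨hx, hs0, hsl, v, hv, w, hw⟩ := hp
    rw [Set.mem_singleton_iff] at hv
    subst hv
    exact ⟨⟨⟨x, w⟩, hx⟩, rfl, by rw [← length_eq_nlen]; exact hw⟩
  have hgmaps : ∀ p ∈ P, gpt l v₀ hWne t p ∈ Kt := by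
    intro p hp
    obtain ⟨w, hwx, hwn, hgp⟩ := gpt_spec l v₀ hWne t p (hcondP p hp)
    simp only [hPdef, Set.mem_setOf_eq] at hp
    obtain ⟨hx, hs0, hsl, -⟩ := hp
    rw [hgp]
    simp only [hKtdef, Set.mem_setOf_eq]
    have h1 : mlen l v₀ p.1 (Quot.mk _ w) ≤ nlen l w.1.2 := mlen_le l v₀ p.1 rfl
    have h1' : (mlen l v₀ p.1 (Quot.mk (wapprox ends (fun e => (l e : ℝ)) v₀ p.1) w) : ℝ)
        ≤ (nlen l w.1.2 : ℝ) := by exact_mod_cast h1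
    rw [hwn] at h1'
    linarith
  have hginj : Set.InjOn (gpt l v₀ hWne t) P := by
    rintro ⟨e, x, s⟩ hp ⟨e', x', s'⟩ hq hpq
    obtain ⟨w₁, hw₁x, hw₁n, hg₁⟩ := gpt_spec l v₀ hWne t (e, x, s) (hcondP _ hp)
    obtain ⟨w₂, hw₂x, hw₂n, hg₂⟩ := gpt_spec l v₀ hWne t (e', x', s') (hcondP _ hq)
    rw [hg₁, hg₂] at hpq
    have he : e = e' := congrArg Sigma.fst hpq
    subst he
    have hC : Quot.mk (wapprox ends (fun e => (l e : ℝ)) v₀ e) w₁ =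
        Quot.mk (wapprox ends (fun e => (l e : ℝ)) v₀ e) w₂ :=
      eq_of_heq (Sigma.mk.inj_iff.mp hpq).2
    simp only [hPdef, Set.mem_setOf_eq] at hp hq
    obtain ⟨-, hs0, hsl, -⟩ := hp
    obtain ⟨-, hs0', hsl', -⟩ := hq
    dsimp at hw₁x hw₁n hw₂x hw₂n hs0 hsl hs0' hsl'
    have hkey := interval_eq l v₀ e (hl e) (hnl e) w₁ w₂ hC
      (t := t) (by rw [hw₁n]; linarith) (by rw [hw₁n]; linarith)
      (by rw [hw₂n]; linarith) (by rw [hw₂n]; linarith)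
    have hxx : x = x' := by rw [← hw₁x, ← hw₂x]; exact hkey.1
    have hss : s = s' := by
      have h2 : (nlen l w₁.1.2 : ℝ) = (nlen l w₂.1.2 : ℝ) := by exact_mod_cast hkey.2
      rw [hw₁n, hw₂n] at h2
      linarith
    rw [hxx, hss]
  have hPfin : P.Finite := by
    apply Set.Finite.of_finite_image (f := gpt l v₀ hWne t) ?_ hginj
    exact hKtfin.subset (Set.image_subset_iff.mpr hgmaps)
  have hle1 : P.ncard ≤ Kt.ncard :=
    Set.ncard_le_ncard_of_injOn _ hgmaps hginj hKtfin
  have hhmaps : ∀ k ∈ Kt, hpt l v₀ hnl t k ∈ P := by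
    intro k hk
    obtain ⟨w', hwC, hwn, hhk⟩ := hpt_spec l v₀ hnl t k
    simp only [hKtdef, Set.mem_setOf_eq] at hk
    obtain ⟨hb1, hb2⟩ := floor_bounds (hl k.1) hk
    rw [← hwn] at hb1 hb2
    rw [hhk]
    simp only [hPdef, Set.mem_setOf_eq]
    refine ⟨w'.2, by linarith, by linarith, v₀, rfl, w'.1.2, ?_⟩
    rw [length_eq_nlen]
    ring
  have hhinj : Set.InjOn (hpt l v₀ hnl t) Kt := by
    intro k hk k' hk' hkk
    obtain ⟨w₁, hC₁, hn₁, hh₁⟩ := hpt_spec l v₀ hnl t k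
    obtain ⟨w₂, hC₂, hn₂, hh₂⟩ := hpt_spec l v₀ hnl t k'
    rw [hh₁, hh₂] at hkk
    have he : k.1 = k'.1 := congrArg Prod.fst hkk
    obtain ⟨e, C⟩ := k
    obtain ⟨e', C'⟩ := k'
    dsimp at he
    subst he
    simp only [Prod.mk.injEq] at hkk
    obtain ⟨-, hx, hs⟩ := hkk
    have hnn : nlen l w₁.1.2 = nlen l w₂.1.2 := by
      have : (nlen l w₁.1.2 : ℝ) = (nlen l w₂.1.2 : ℝ) := by linarith
      exact_mod_cast this
    have hap : wapprox ends (fun e => (l e : ℝ)) v₀ e w₁ w₂ :=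
      Or.inl ⟨hx, 0, by
        rw [length_eq_nlen, length_eq_nlen, hnn]; push_cast; ring⟩
    have hCC : C = C' := by
      have h1 : Quot.mk (wapprox ends (fun e => (l e : ℝ)) v₀ e) w₁ = C := hC₁
      have h2 : Quot.mk (wapprox ends (fun e => (l e : ℝ)) v₀ e) w₂ = C' := hC₂
      rw [← h1, ← h2]
      exact Quot.sound hap
    rw [hCC]
  have hle2 : Kt.ncard ≤ P.ncard :=
    Set.ncard_le_ncard_of_injOn _ hhmaps hhinj hPfin
  have hNp : Npts ends (fun e => (l e : ℝ)) ({v₀} : Set V) t = P.ncard := rfl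
  rw [hNp]
  exact le_antisymm hle1 hle2

end Stmt11Aux
/-- the stabilization time of the DP-system with a single initial
vertex `v₀` on a metric graph with positive integer edge lengths equals the
maximum, over all edges `e` and all equivalence classes `C` of `≈` on `W(v₀, e)`,
of the minimal length of a walk in `C`; in particular both the least
stabilization bound and this maximum exist (are finite). -/
theorem stmt11 {E : Type} [Fintype E] [Nonempty E] (l : E → ℕ) (hl : ∀ e, 0 < l e)
    {V : Type} (ends : E → Sym2 V) (v₀ : V)
    (hP : IsDPSystem ends ({v₀} : Set V)) :
    ∃ T : ℝ,
      IsLeast {T' : ℝ | IsStabBound ends (fun e => (l e : ℝ)) {v₀} T'} T ∧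
      IsGreatest {x : ℝ |
        ∃ (e : E) (C : Quot (wapprox ends (fun e => (l e : ℝ)) v₀ e)),
          IsLeast {L : ℝ | ∃ w : WalkTo ends v₀ e,
            Quot.mk (wapprox ends (fun e => (l e : ℝ)) v₀ e) w = C ∧
            w.1.2.length (fun e => (l e : ℝ)) = L} x} T := by
  classical
  obtain ⟨hfinV, hnl, hconn, -⟩ := hP
  haveI hfib : ∀ e : E, Finite (Quot (wapprox ends (fun e => (l e : ℝ)) v₀ e)) :=
    fun e => Stmt11Aux.finite_quot l v₀ e (hl e) (hnl e)
  haveI hKfin : Finite (Σ e : E, Quot (wapprox ends (fun e => (l e : ℝ)) v₀ e)) := by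
    infer_instance
  set mfun : (Σ e : E, Quot (wapprox ends (fun e => (l e : ℝ)) v₀ e)) → ℕ :=
    fun k => Stmt11Aux.mlen l v₀ k.1 k.2 with hmfun
  have hKne : Nonempty (Σ e : E, Quot (wapprox ends (fun e => (l e : ℝ)) v₀ e)) := by
    obtain ⟨e⟩ := (inferInstance : Nonempty E)
    obtain ⟨a, b, hab⟩ := Stmt11Aux.sym2_decomp (ends e)
    obtain ⟨w⟩ := hconn v₀ a
    exact ⟨⟨e, Quot.mk _ ⟨⟨a, w⟩, by rw [hab]; exact Sym2.mem_mk_left a b⟩⟩⟩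
  have hbdd : BddAbove (Set.range mfun) := (Set.finite_range mfun).bddAbove
  have hmem := Nat.sSup_mem (Set.range_nonempty mfun) hbdd
  set Tnat := sSup (Set.range mfun) with hTnat
  obtain ⟨k₀, hk₀⟩ := hmem
  have hub : ∀ k, mfun k ≤ Tnat := fun k => le_csSup hbdd ⟨k, rfl⟩
  have hcount := Stmt11Aux.npts_eq l hl v₀ hnl hconn hKfin
  have hall : ∀ u : ℝ, (Tnat : ℝ) ≤ u →
      {k : Σ e : E, Quot (wapprox ends (fun e => (l e : ℝ)) v₀ e) |
        (Stmt11Aux.mlen l v₀ k.1 k.2 : ℝ) ≤ u} = Set.univ := by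
    intro u hu
    apply Set.eq_univ_of_forall
    intro k
    simp only [Set.mem_setOf_eq]
    have h1 : (Stmt11Aux.mlen l v₀ k.1 k.2 : ℝ) ≤ (Tnat : ℝ) := by
      exact_mod_cast hub k
    linarith
  refine ⟨(Tnat : ℝ), ⟨⟨Nat.cast_nonneg _, ?_⟩, ?_⟩, ?_, ?_⟩
  · intro t ht
    rw [hcount t, hcount (Tnat : ℝ), hall t ht, hall (Tnat : ℝ) le_rfl]
  · intro T' hT'
    by_contra hcon
    push_neg at hcon
    have h1 := hT'.2 (Tnat : ℝ) (le_of_lt hcon)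
    rw [hcount (Tnat : ℝ), hcount T', hall (Tnat : ℝ) le_rfl] at h1
    have hk₀notin : k₀ ∉ {k : Σ e : E, Quot (wapprox ends (fun e => (l e : ℝ)) v₀ e) |
        (Stmt11Aux.mlen l v₀ k.1 k.2 : ℝ) ≤ T'} := by
      simp only [Set.mem_setOf_eq, not_le]
      have : (Tnat : ℝ) = (Stmt11Aux.mlen l v₀ k₀.1 k₀.2 : ℝ) := by
        exact_mod_cast congrArg (Nat.cast (R := ℝ)) hk₀.symm
      linarith
    have hss : {k : Σ e : E, Quot (wapprox ends (fun e => (l e : ℝ)) v₀ e) |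
        (Stmt11Aux.mlen l v₀ k.1 k.2 : ℝ) ≤ T'} ⊂ Set.univ := by
      rw [Set.ssubset_univ_iff]
      intro h
      exact hk₀notin (h ▸ Set.mem_univ k₀)
    have h2 := Set.ncard_lt_ncard hss Set.finite_univ
    omega
  · refine ⟨k₀.1, k₀.2, ?_, ?_⟩
    · obtain ⟨w₀, hwC, hwn⟩ := Stmt11Aux.exists_mlen l v₀ k₀.1 k₀.2
      refine ⟨w₀, hwC, ?_⟩
      rw [Stmt11Aux.length_eq_nlen, hwn]
      exact_mod_cast congrArg (Nat.cast (R := ℝ)) hk₀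
    · rintro L ⟨w, hwC, hwL⟩
      rw [Stmt11Aux.length_eq_nlen] at hwL
      have h1 := Stmt11Aux.mlen_le l v₀ k₀.1 hwC
      have h2 : Tnat ≤ Stmt11Aux.nlen l w.1.2 := le_trans (le_of_eq hk₀.symm) h1
      rw [← hwL]
      exact_mod_cast h2
  · rintro x ⟨e, C, hx⟩
    obtain ⟨w₀, hwC, hwn⟩ := Stmt11Aux.exists_mlen l v₀ e C
    have hmm : ((Stmt11Aux.mlen l v₀ e C : ℕ) : ℝ) ∈ {L : ℝ | ∃ w : WalkTo ends v₀ e,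
        Quot.mk (wapprox ends (fun e => (l e : ℝ)) v₀ e) w = C ∧
        w.1.2.length (fun e => (l e : ℝ)) = L} :=
      ⟨w₀, hwC, by rw [Stmt11Aux.length_eq_nlen, hwn]⟩
    have h1 : x ≤ (Stmt11Aux.mlen l v₀ e C : ℝ) := hx.2 hmm
    have h2 : Stmt11Aux.mlen l v₀ e C ≤ Tnat := hub ⟨e, C⟩
    have h3 : (Stmt11Aux.mlen l v₀ e C : ℝ) ≤ (Tnat : ℝ) := by exact_mod_cast h2
    linarith
end

section
/- There exists a finite edge set E, with all edge lengths equal to 1, such that no DP-system in LSTDP(E) has an acyclic underlying graph; in fact E can be taken to consist of four unit-length edges, arranged so that some DP-system on a graph containing a cycle has stabilization time 4, while every DP-system on an acyclic metric graph assembled from E has stabilization time at most 3. -/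
/-!
With unit lengths all dynamic points move in lockstep: at time `t` they sit at distance
`t - ⌊t⌋` along the arcs leaving the vertices reached from `S` by walks of length exactly `⌊t⌋`,
so `N(t)` counts those arcs. Reversing arcs shows that this count never decreases from one
integer time to the next. In a forest every two walks with the same ends have lengths of the
same parity, and the shortest one is a path, so with at most four edges the reachable sets are
`2`-periodic from step `3` on and `N` is constant from time `3`. On the lollipop (a triangle with
a pendant edge, started at the pendant vertex) the odd cycle eventually makes every vertex
reachable at every time, but at time `3` the pendant vertex is still missed:
`N(3) = 7 < 8 = N(4)`.
-/

namespace SimpleGraph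

variable {V : Type*} {G : SimpleGraph V}

lemma Walk.exists_length_add_two_mul {u v w : V} (h : G.Adj u w) (p : G.Walk u v) (k : ℕ) :
    ∃ q : G.Walk u v, q.length = p.length + 2 * k := by
  induction k with
  | zero => exact ⟨p, rfl⟩
  | succ k ih =>
    obtain ⟨q, hq⟩ := ih
    exact ⟨.cons h (.cons h.symm q), by simp only [Walk.length_cons, hq]; ring⟩

lemma Walk.IsTrail.length_le_ncard_edgeSet {u v : V} {p : G.Walk u v} (hp : p.IsTrail)
    (hfin : G.edgeSet.Finite) : p.length ≤ G.edgeSet.ncard := by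
  classical
  rw [← p.length_edges, ← List.toFinset_card_of_nodup hp.edges_nodup, ← Set.ncard_coe_finset]
  exact Set.ncard_le_ncard (fun d hd => p.edges_subset_edgeSet (List.mem_toFinset.1 hd)) hfin

lemma Walk.setOf_mem_edges_and_mem_eq_image {u v : V} (p : G.Walk u v) (x : V) :
    {d | d ∈ p.edges ∧ x ∈ d} = (fun y => s(x, y)) '' p.toSubgraph.neighborSet x := by
  ext d
  induction d using Sym2.ind with
  | _ a b =>
  simp only [Set.mem_ofPred_eq, Set.mem_image, Subgraph.mem_neighborSet,
    ← Subgraph.mem_edgeSet, Walk.mem_edges_toSubgraph, Sym2.mem_iff]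
  constructor
  · rintro ⟨hd, rfl | rfl⟩
    · exact ⟨b, hd, rfl⟩
    · exact ⟨a, by rwa [Sym2.eq_swap], Sym2.eq_swap⟩
  · rintro ⟨y, hy, hxy⟩
    exact ⟨hxy ▸ hy, Sym2.mem_iff.1 (hxy ▸ Sym2.mem_mk_left x y)⟩

lemma IsAcyclic.even_length_add_length (hG : G.IsAcyclic) {u v : V} (p q : G.Walk u v) :
    Even (p.length + q.length) := by
  simpa using two_colorable_iff_forall_loop_even.1 hG.colorable_two u (p.append q.reverse)

/-- The path between the endpoints is at most `n + 1` long and has the parity of `n`. -/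
lemma IsAcyclic.exists_walk_length_add_two_iff (hG : G.IsAcyclic) (hfin : G.edgeSet.Finite)
    {n : ℕ} (hn : 0 < n) (hcard : G.edgeSet.ncard ≤ n + 1) {u v : V} :
    (∃ p : G.Walk u v, p.length = n + 2) ↔ ∃ p : G.Walk u v, p.length = n := by
  classical
  constructor
  · rintro ⟨p, hp⟩
    cases p with
    | nil => simp at hp
    | cons h p' =>
      set path := (Walk.cons h p').bypass
      have hle : path.length ≤ G.edgeSet.ncard :=
        (Walk.cons h p').bypass_isPath.isTrail.length_le_ncard_edgeSet hfin
      obtain ⟨k, hk⟩ := hG.even_length_add_length (Walk.cons h p') path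
      obtain ⟨q, hq⟩ := path.exists_length_add_two_mul h ((n - path.length) / 2)
      exact ⟨q, by omega⟩
  · rintro ⟨p, hp⟩
    cases p with
    | nil => simp at hp; omega
    | cons h p' =>
      obtain ⟨q, hq⟩ := (Walk.cons h p').exists_length_add_two_mul h 1
      exact ⟨q, by omega⟩

variable (G) in
def reachIn (S : Set V) (n : ℕ) : Set V :=
  {x | ∃ v ∈ S, ∃ p : G.Walk x v, p.length = n}

@[simp]
lemma reachIn_zero (S : Set V) : G.reachIn S 0 = S := by
  ext x
  constructor
  · rintro ⟨v, hv, p, hp⟩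
    cases p with
    | nil => exact hv
    | cons => simp at hp
  · exact fun hx => ⟨x, hx, .nil, rfl⟩

lemma reachIn_succ (S : Set V) (n : ℕ) :
    G.reachIn S (n + 1) = {x | ∃ y, G.Adj x y ∧ y ∈ G.reachIn S n} := by
  ext x
  constructor
  · rintro ⟨v, hv, p, hp⟩
    cases p with
    | nil => simp at hp
    | cons h p => exact ⟨_, h, v, hv, p, by simpa using hp⟩
  · rintro ⟨y, h, v, hv, p, hp⟩
    exact ⟨v, hv, .cons h p, by simp [hp]⟩

lemma IsAcyclic.reachIn_add_two (hG : G.IsAcyclic) (hfin : G.edgeSet.Finite) (S : Set V)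
    {n : ℕ} (hn : 0 < n) (hcard : G.edgeSet.ncard ≤ n + 1) :
    G.reachIn S (n + 2) = G.reachIn S n := by
  ext x
  exact exists_congr fun _ => and_congr_right fun _ =>
    hG.exists_walk_length_add_two_iff hfin hn hcard

end SimpleGraph

lemma eq_of_le_succ_of_add_two_eq {f : ℕ → ℕ} {m : ℕ} (hmono : ∀ n ≥ m, f n ≤ f (n + 1))
    (hper : ∀ n ≥ m, f (n + 2) = f n) : ∀ n ≥ m, f n = f m := by
  intro n hn
  induction n, hn using Nat.le_induction with
  | base => rfl
  | succ n hn ih =>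
    rw [← ih]
    exact le_antisymm (hper n hn ▸ hmono (n + 1) (by omega)) (hmono n hn)

lemma natCast_eq_sub_iff_eq_floor {t s : ℝ} (ht : 0 ≤ t) {m : ℕ} :
    (0 ≤ s ∧ s < 1 ∧ (m : ℝ) = t - s) ↔ (m = ⌊t⌋₊ ∧ s = t - ⌊t⌋₊) := by
  constructor
  · rintro ⟨hs0, hs1, hm⟩
    have hfloor : ⌊t⌋₊ = m := (Nat.floor_eq_iff ht).2 ⟨by linarith, by linarith⟩
    exact ⟨hfloor.symm, by rw [hfloor]; linarith⟩
  · rintro ⟨rfl, rfl⟩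
    exact ⟨by linarith [Nat.floor_le ht], by linarith [Nat.lt_floor_add_one t], by ring⟩

/-- Parallel edges are merged and loops dropped. -/
def underlyingGraph {E V : Type} (ends : E → Sym2 V) : SimpleGraph V :=
  SimpleGraph.fromEdgeSet (Set.range ends)

section UnderlyingGraph

variable {E V : Type} {ends : E → Sym2 V}

lemma underlyingGraph_adj {a b : V} :
    (underlyingGraph ends).Adj a b ↔ (∃ e, ends e = s(a, b)) ∧ a ≠ b := by
  simp [underlyingGraph]

lemma edgeSet_underlyingGraph_subset : (underlyingGraph ends).edgeSet ⊆ Set.range ends :=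
  fun _ hd => (SimpleGraph.edgeSet_fromEdgeSet _ ▸ hd).1

lemma ncard_edgeSet_underlyingGraph_le [Finite E] :
    (underlyingGraph ends).edgeSet.ncard ≤ Nat.card E := calc
  _ ≤ (Set.range ends).ncard := Set.ncard_le_ncard edgeSet_underlyingGraph_subset
  _ = (ends '' Set.univ).ncard := by rw [Set.image_univ]
  _ ≤ (Set.univ : Set E).ncard := Set.ncard_image_le Set.finite_univ
  _ = Nat.card E := Set.ncard_univ E

namespace MGWalk

lemma length_eq_length_edges {l : E → ℝ} (hl : ∀ e, l e = 1) :
    ∀ {a b : V} (w : MGWalk ends a b), w.length l = w.edges.length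
  | _, _, nil _ => by simp [length, edges]
  | _, _, cons e _ t => by simp [length, edges, length_eq_length_edges hl t, hl e, add_comm]

def toWalk (hloop : ∀ e, ¬ (ends e).IsDiag) :
    ∀ {a b : V}, MGWalk ends a b → (underlyingGraph ends).Walk a b
  | _, _, nil a => .nil
  | _, _, cons e h t =>
    .cons (underlyingGraph_adj.2 ⟨⟨e, h⟩, fun hab => hloop e (by rw [h, hab]; rfl)⟩)
      (t.toWalk hloop)

@[simp]
lemma length_toWalk (hloop : ∀ e, ¬ (ends e).IsDiag) :
    ∀ {a b : V} (w : MGWalk ends a b), (w.toWalk hloop).length = w.edges.length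
  | _, _, nil _ => rfl
  | _, _, cons _ _ t => by simp [toWalk, edges, length_toWalk hloop t]

end MGWalk

lemma exists_mgWalk_of_walk {C : Set E} :
    ∀ {a b : V} (p : (underlyingGraph ends).Walk a b), (∀ d ∈ p.edges, d ∈ ends '' C) →
      ∃ w : MGWalk ends a b, w.edges.length = p.length ∧ ∀ e ∈ w.edges, e ∈ C
  | _, _, .nil, _ => ⟨.nil _, rfl, by simp [MGWalk.edges]⟩
  | _, _, .cons _ p, hp => by
    obtain ⟨e, heC, he⟩ := hp _ List.mem_cons_self
    obtain ⟨w, hlen, hw⟩ := exists_mgWalk_of_walk p fun d hd => hp d (List.mem_cons_of_mem _ hd)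
    refine ⟨.cons e he w, by simp [MGWalk.edges, hlen], ?_⟩
    simp only [MGWalk.edges, List.mem_cons, forall_eq_or_imp]
    exact ⟨heC, hw⟩

lemma exists_mgWalk_iff_exists_walk (hloop : ∀ e, ¬ (ends e).IsDiag) {a b : V} {n : ℕ} :
    (∃ w : MGWalk ends a b, w.edges.length = n) ↔
      ∃ p : (underlyingGraph ends).Walk a b, p.length = n := by
  constructor
  · rintro ⟨w, rfl⟩
    exact ⟨w.toWalk hloop, w.length_toWalk hloop⟩
  · rintro ⟨p, rfl⟩
    obtain ⟨w, hw, -⟩ := exists_mgWalk_of_walk (C := Set.univ) p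
      (by simpa using fun d hd => edgeSet_underlyingGraph_subset (p.edges_subset_edgeSet hd))
    exact ⟨w, hw⟩

/-- One edge is chosen in each class of parallel edges met by the cycle. -/
lemma exists_isCycleSet_of_isCycle {v : V} {c : (underlyingGraph ends).Walk v v}
    (hc : c.IsCycle) : ∃ C : Set E, IsCycleSet ends C := by
  classical
  obtain ⟨C, -, hbij⟩ := Set.exists_subset_bijOn (ends ⁻¹' {d | d ∈ c.edges}) ends
  rw [Set.image_preimage_eq_of_subset (s := {d | d ∈ c.edges})
    fun _ hd => edgeSet_underlyingGraph_subset (c.edges_subset_edgeSet hd)] at hbij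
  have hsupport : ∀ x, OnEdgeSet ends C x → x ∈ c.support := by
    rintro x ⟨e, he, hx⟩
    obtain ⟨y, hy⟩ := Sym2.mem_iff_exists.1 hx
    exact c.fst_mem_support_of_mem_edges (hy ▸ hbij.mapsTo he)
  refine ⟨C, ?_, ?_, ?_⟩
  · have hlen : 0 < c.edges.length := by
      have := hc.three_le_length
      rw [c.length_edges]
      omega
    obtain ⟨d, hd⟩ := List.exists_mem_of_length_pos hlen
    obtain ⟨e, he, -⟩ := hbij.surjOn hd
    exact ⟨e, he⟩
  · intro a b ha hb
    refine exists_mgWalk_of_walk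
      ((c.takeUntil a (hsupport a ha)).reverse.append (c.takeUntil b (hsupport b hb))) ?_
      |>.imp fun _ h => h.2
    intro d hd
    rw [hbij.image_eq]
    simp only [SimpleGraph.Walk.edges_append, SimpleGraph.Walk.edges_reverse, List.mem_append,
      List.mem_reverse] at hd
    exact hd.elim (c.edges_takeUntil_subset_edges _ ·) (c.edges_takeUntil_subset_edges _ ·)
  · intro x hx
    have hinj : Set.InjOn ends {e | e ∈ C ∧ x ∈ ends e} := hbij.injOn.mono fun _ h => h.1
    have himage : ends '' {e | e ∈ C ∧ x ∈ ends e} = {d | d ∈ c.edges ∧ x ∈ d} := by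
      change ends '' (C ∩ ends ⁻¹' {d | x ∈ d}) = _
      rw [Set.image_inter_preimage, hbij.image_eq]
      rfl
    rw [edgeDegree, ← hinj.ncard_image, himage, c.setOf_mem_edges_and_mem_eq_image,
      Set.ncard_image_of_injective _ fun _ _ h => Sym2.congr_right.1 h,
      hc.ncard_neighborSet_toSubgraph_eq_two (hsupport x hx)]

lemma IsAcyclicG.isAcyclic_underlyingGraph (hac : IsAcyclicG ends) :
    (underlyingGraph ends).IsAcyclic := fun _ _ hc =>
  (exists_isCycleSet_of_isCycle hc).elim hac

end UnderlyingGraph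

section DPSystem

variable {E V : Type} {ends : E → Sym2 V}

/-- The arcs `(e, x, y)`, i.e. edge `e` traversed from `x` to `y`, whose tail `x` is reached
from `S` in exactly `n` steps. -/
def arcsAt (ends : E → Sym2 V) (S : Set V) (n : ℕ) : Set (E × V × V) :=
  {a | ends a.1 = s(a.2.1, a.2.2) ∧ a.2.1 ∈ (underlyingGraph ends).reachIn S n}

lemma exists_mgWalk_iff_mem_reachIn (hloop : ∀ e, ¬ (ends e).IsDiag) {S : Set V} {x : V}
    {n : ℕ} :
    (∃ v₀ ∈ S, ∃ w : MGWalk ends v₀ x, w.edges.length = n) ↔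
      x ∈ (underlyingGraph ends).reachIn S n := by
  refine exists_congr fun _ => and_congr_right fun _ =>
    (exists_mgWalk_iff_exists_walk hloop).trans ?_
  exact ⟨fun ⟨p, hp⟩ => ⟨p.reverse, by simpa using hp⟩,
    fun ⟨p, hp⟩ => ⟨p.reverse, by simpa using hp⟩⟩

variable {l : E → ℝ} {S : Set V} {t : ℝ}

lemma isPoint_iff (hloop : ∀ e, ¬ (ends e).IsDiag) (hl : ∀ e, l e = 1) (ht : 0 ≤ t)
    {e : E} {x : V} {s : ℝ} :
    IsPoint ends l S t e x s ↔ (∃ y, ends e = s(x, y)) ∧ s = t - ⌊t⌋₊ ∧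
      x ∈ (underlyingGraph ends).reachIn S ⌊t⌋₊ := by
  simp only [IsPoint, hl, MGWalk.length_eq_length_edges hl, Sym2.mem_iff_exists]
  rw [← exists_mgWalk_iff_mem_reachIn hloop]
  constructor
  · rintro ⟨hy, hs0, hs1, v₀, hv₀, w, hw⟩
    obtain ⟨hm, rfl⟩ := (natCast_eq_sub_iff_eq_floor ht).1 ⟨hs0, hs1, hw⟩
    exact ⟨hy, rfl, v₀, hv₀, w, hm⟩
  · rintro ⟨hy, rfl, v₀, hv₀, w, hw⟩
    obtain ⟨hs0, hs1, -⟩ := (natCast_eq_sub_iff_eq_floor ht).2 ⟨hw, rfl⟩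
    exact ⟨hy, hs0, hs1, v₀, hv₀, w, by rw [hw]; ring⟩

lemma npts_eq_ncard_arcsAt (hloop : ∀ e, ¬ (ends e).IsDiag) (hl : ∀ e, l e = 1) (ht : 0 ≤ t) :
    Npts ends l S t = (arcsAt ends S ⌊t⌋₊).ncard := by
  have hpoints : {p : E × V × ℝ | IsPoint ends l S t p.1 p.2.1 p.2.2} =
      (fun a => (a.1, a.2.1, t - ⌊t⌋₊)) '' arcsAt ends S ⌊t⌋₊ := by
    ext ⟨e, x, s⟩
    simp only [Set.mem_ofPred_eq, isPoint_iff hloop hl ht, arcsAt, Set.mem_image, Prod.ext_iff]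
    constructor
    · rintro ⟨⟨y, hy⟩, rfl, hx⟩
      exact ⟨(e, x, y), ⟨hy, hx⟩, rfl, rfl, rfl⟩
    · rintro ⟨⟨e, x, y⟩, ⟨hy, hx⟩, rfl, rfl, rfl⟩
      exact ⟨⟨y, hy⟩, rfl, hx⟩
  rw [Npts, hpoints, Set.InjOn.ncard_image]
  rintro ⟨e, x, y⟩ ⟨hy, -⟩ ⟨e', x', y'⟩ ⟨hy', -⟩ h
  simp only [Prod.mk.injEq] at h hy hy'
  obtain ⟨rfl, rfl, -⟩ := h
  rw [Sym2.congr_right.1 (hy.symm.trans hy')]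

lemma ncard_arcsAt_le_succ [Finite E] [Finite V] (hloop : ∀ e, ¬ (ends e).IsDiag) (n : ℕ) :
    (arcsAt ends S n).ncard ≤ (arcsAt ends S (n + 1)).ncard := by
  refine Set.ncard_le_ncard_of_injOn (fun a => (a.1, a.2.2, a.2.1)) ?_ ?_
  · rintro ⟨e, x, y⟩ ⟨he, hx⟩
    dsimp only at he hx ⊢
    refine ⟨he.trans Sym2.eq_swap, ?_⟩
    rw [SimpleGraph.reachIn_succ]
    refine ⟨x, underlyingGraph_adj.2 ⟨⟨e, he.trans Sym2.eq_swap⟩, ?_⟩, hx⟩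
    intro hyx
    apply hloop e
    rw [he, show y = x from hyx]
    rfl
  · rintro ⟨e, x, y⟩ - ⟨e', x', y'⟩ - h
    simp only [Prod.ext_iff] at h ⊢
    tauto

lemma stabTime_le_of_ncard_arcsAt_eq (hloop : ∀ e, ¬ (ends e).IsDiag) (hl : ∀ e, l e = 1)
    {m : ℕ} (h : ∀ n ≥ m, (arcsAt ends S n).ncard = (arcsAt ends S m).ncard) :
    stabTime ends l S ≤ m := by
  refine csInf_le ⟨0, fun T hT => hT.1⟩ ⟨m.cast_nonneg, fun t ht => ?_⟩
  have ht0 : 0 ≤ t := le_trans m.cast_nonneg ht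
  rw [npts_eq_ncard_arcsAt hloop hl ht0, npts_eq_ncard_arcsAt hloop hl m.cast_nonneg,
    Nat.floor_natCast]
  exact h _ (Nat.le_floor ht)

lemma stabTime_le_of_isAcyclicG [Finite E] (hDP : IsDPSystem ends S) (hac : IsAcyclicG ends)
    (hl : ∀ e, l e = 1) {m : ℕ} (hm : 0 < m) (hcard : Nat.card E ≤ m + 1) :
    stabTime ends l S ≤ m := by
  obtain ⟨_, hloop, -, -⟩ := hDP
  have hfin : (underlyingGraph ends).edgeSet.Finite :=
    (Set.finite_range ends).subset edgeSet_underlyingGraph_subset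
  refine stabTime_le_of_ncard_arcsAt_eq hloop hl
    (eq_of_le_succ_of_add_two_eq (fun n _ => ncard_arcsAt_le_succ hloop n) fun n hn => ?_)
  rw [arcsAt, arcsAt, hac.isAcyclic_underlyingGraph.reachIn_add_two hfin S (by omega)
    (ncard_edgeSet_underlyingGraph_le.trans (by omega))]

end DPSystem

section Lollipop

def lollipop : Fin 4 → Sym2 (Fin 4) := ![s(0, 1), s(1, 2), s(2, 3), s(3, 1)]

lemma lollipop_reachIn_succ (X Y : Set (Fin 4)) (n : ℕ)
    (hX : (underlyingGraph lollipop).reachIn {0} n = X) [DecidablePred (· ∈ X)]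
    [DecidablePred (· ∈ Y)]
    (h : ∀ x, x ∈ Y ↔ ∃ y, ((∃ e, lollipop e = s(x, y)) ∧ x ≠ y) ∧ y ∈ X := by decide) :
    (underlyingGraph lollipop).reachIn {0} (n + 1) = Y := by
  ext x
  simp only [SimpleGraph.reachIn_succ, underlyingGraph_adj, hX, Set.mem_ofPred_eq, h]

lemma lollipop_reachIn_three : (underlyingGraph lollipop).reachIn {0} 3 = {1, 2, 3} :=
  lollipop_reachIn_succ {0, 2, 3} _ 2 <| lollipop_reachIn_succ {1} _ 1 <|
    lollipop_reachIn_succ {0} _ 0 (SimpleGraph.reachIn_zero _)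

lemma lollipop_reachIn_of_four_le {n : ℕ} (hn : 4 ≤ n) :
    (underlyingGraph lollipop).reachIn {0} n = Set.univ := by
  induction n, hn using Nat.le_induction with
  | base => exact lollipop_reachIn_succ _ _ 3 lollipop_reachIn_three
  | succ n _ ih => exact lollipop_reachIn_succ _ _ n ih

lemma ncard_arcsAt_lollipop_three : (arcsAt lollipop {0} 3).ncard = 7 := by
  rw [arcsAt, lollipop_reachIn_three]
  convert Set.ncard_coe_finset (Finset.univ.filter fun a : Fin 4 × Fin 4 × Fin 4 =>
    lollipop a.1 = s(a.2.1, a.2.2) ∧ a.2.1 ∈ ({1, 2, 3} : Finset (Fin 4)))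
  · ext; simp
  · decide

lemma ncard_arcsAt_lollipop_of_four_le {n : ℕ} (hn : 4 ≤ n) :
    (arcsAt lollipop {0} n).ncard = 8 := by
  rw [arcsAt, lollipop_reachIn_of_four_le hn]
  convert Set.ncard_coe_finset (Finset.univ.filter fun a : Fin 4 × Fin 4 × Fin 4 =>
    lollipop a.1 = s(a.2.1, a.2.2))
  · ext; simp
  · decide

lemma lollipop_loopless : ∀ e, ¬ (lollipop e).IsDiag := by decide

lemma isDPSystem_lollipop : IsDPSystem lollipop {0} := by
  refine ⟨inferInstance, lollipop_loopless, fun a b => ?_, ⟨0, rfl⟩⟩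
  have hreach (x : Fin 4) : x ∈ (underlyingGraph lollipop).reachIn {0} 4 := by
    simp [lollipop_reachIn_of_four_le le_rfl]
  obtain ⟨_, rfl, pa, -⟩ := hreach a
  obtain ⟨_, rfl, pb, -⟩ := hreach b
  obtain ⟨w, -⟩ := (exists_mgWalk_iff_exists_walk lollipop_loopless).2 ⟨pa.append pb.reverse, rfl⟩
  exact ⟨w⟩

lemma exists_isCycleSet_lollipop : ∃ C : Set (Fin 4), IsCycleSet lollipop C := by
  let triangle : (underlyingGraph lollipop).Walk 1 1 :=
    .cons (underlyingGraph_adj.2 ⟨⟨1, rfl⟩, by decide⟩)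
      (.cons (underlyingGraph_adj.2 ⟨⟨2, rfl⟩, by decide⟩)
        (.cons (underlyingGraph_adj.2 ⟨⟨3, rfl⟩, by decide⟩) .nil))
  refine exists_isCycleSet_of_isCycle (c := triangle) ?_
  simp [triangle, SimpleGraph.Walk.isCycle_def, SimpleGraph.Walk.isTrail_def]

lemma stabTime_lollipop {l : Fin 4 → ℝ} (hl : ∀ e, l e = 1) : stabTime lollipop l {0} = 4 := by
  have hN {t : ℝ} (ht : 0 ≤ t) : Npts lollipop l {0} t = (arcsAt lollipop {0} ⌊t⌋₊).ncard :=
    npts_eq_ncard_arcsAt lollipop_loopless hl ht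
  have hN4 : Npts lollipop l {0} 4 = 8 := by
    rw [hN (by norm_num), ncard_arcsAt_lollipop_of_four_le (by norm_num)]
  refine IsLeast.csInf_eq ⟨⟨by norm_num, fun t ht => ?_⟩, fun T hT => ?_⟩
  · rw [hN4, hN (by linarith),
      ncard_arcsAt_lollipop_of_four_le (Nat.le_floor (by exact_mod_cast ht))]
  · by_contra! hT4
    have hfloor : ⌊max T 3⌋₊ = 3 := (Nat.floor_eq_iff (by positivity)).2
      ⟨by exact_mod_cast le_max_right T 3, by norm_num; exact hT4⟩
    have h3 := hT.2 (max T 3) (le_max_left T 3)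
    rw [hN (by positivity), hfloor, ncard_arcsAt_lollipop_three, ← hT.2 4 hT4.le, hN4] at h3
    omega

end Lollipop

/-- there is a finite edge set `E` of four unit-length edges such
that no DP-system in `LSTDP(E)` has an acyclic underlying graph: some DP-system
on a graph containing a cycle has stabilization time `4`, while every DP-system
on an acyclic metric graph assembled from `E` has stabilization time at most `3`. -/
theorem stmt13 :
    ∃ (E : Type) (_ : Fintype E) (l : E → ℕ),
      (∀ e : E, l e = 1) ∧ Nat.card E = 4 ∧
      -- no DP-system in LSTDP(E) is acyclic
      (∀ (V : Type) (ends : E → Sym2 V) (S : Set V),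
        IsDPSystem ends S → IsMaxStab (fun e => (l e : ℝ)) ends S →
        ¬ IsAcyclicG ends) ∧
      -- some DP-system whose graph contains a cycle has stabilization time 4
      (∃ (V : Type) (ends : E → Sym2 V) (S : Set V),
        IsDPSystem ends S ∧ (∃ C : Set E, IsCycleSet ends C) ∧
        stabTime ends (fun e => (l e : ℝ)) S = 4) ∧
      -- every acyclic DP-system has stabilization time at most 3
      (∀ (V : Type) (ends : E → Sym2 V) (S : Set V),
        IsDPSystem ends S → IsAcyclicG ends →
        stabTime ends (fun e => (l e : ℝ)) S ≤ 3) := by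
  have hl : ∀ e : Fin 4, ((1 : ℕ) : ℝ) = 1 := fun _ => Nat.cast_one
  have hacyclic (V : Type) (ends : Fin 4 → Sym2 V) (S : Set V) (hDP : IsDPSystem ends S)
      (hac : IsAcyclicG ends) : stabTime ends (fun _ => ((1 : ℕ) : ℝ)) S ≤ 3 := by
    exact_mod_cast stabTime_le_of_isAcyclicG hDP hac hl (m := 3) (by norm_num) (by simp)
  refine ⟨Fin 4, inferInstance, fun _ => 1, fun _ => rfl, by simp, ?_,
    ⟨Fin 4, lollipop, {0}, isDPSystem_lollipop, exists_isCycleSet_lollipop,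
      stabTime_lollipop hl⟩, hacyclic⟩
  intro V ends S hDP hmax hac
  have hge := hmax (Fin 4) lollipop {0} isDPSystem_lollipop
  rw [stabTime_lollipop hl] at hge
  linarith [hacyclic V ends S hDP hac]
end
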